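/- Let ρ be a positive semidefinite operator on a finite-dimensional Hilbert space 𝒦, P an orthogonal projection on 𝒦, T the swap on 𝒦⊗𝒦, and R_{ii} = (1/2)[I-(-1)^i T][P⊗(I-P)][I-(-1)^i T] for i ∈ {0,1}. Then tr(ρ⊗ρ · R_{11}) - tr(ρ⊗ρ · R_{00}) = ‖[ρ, P]‖²_HS, where ‖·‖_HS is the Hilbert–Schmidt norm. -/

import Mathlib

/-!
Writing `Q = P ⊗ (I - P)` and `T` for the swap, expanding the definition gives
`R₁₁ - R₀₀ = QT + TQ`. Since `tr((A ⊗ B) T) = tr(AB)`, tracing against `ρ ⊗ ρ` yields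
`tr(ρPρ(I - P)) + tr(Pρ(I - P)ρ)`, and for Hermitian `ρ` and an orthogonal projection `P`
this is exactly `tr([ρ, P]† [ρ, P])`.
-/

open Matrix Kronecker ComplexOrder

/-- The swap (exchange) operator on `𝒦 ⊗ 𝒦`. -/
def swapMatrix (m : Type*) [Fintype m] [DecidableEq m] : Matrix (m × m) (m × m) ℂ :=
  Matrix.of fun p q => if p.1 = q.2 ∧ p.2 = q.1 then 1 else 0

/-- `R_{ij} := (1/2)[I - (-1)^i T][P⊗(I-P)][I - (-1)^j T]`. -/
noncomputable def Rop {m : Type*} [Fintype m] [DecidableEq m]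
    (P : Matrix m m ℂ) (i j : Fin 2) : Matrix (m × m) (m × m) ℂ :=
  (2 : ℂ)⁻¹ • ((1 - ((-1 : ℂ)) ^ (i : ℕ) • swapMatrix m) * (P ⊗ₖ (1 - P)) *
    (1 - ((-1 : ℂ)) ^ (j : ℕ) • swapMatrix m))

lemma trace_kronecker_mul_swapMatrix {m : Type*} [Fintype m] [DecidableEq m]
    (A B : Matrix m m ℂ) :
    ((A ⊗ₖ B) * swapMatrix m).trace = (A * B).trace := by
  simp only [Matrix.trace, Matrix.diag, Matrix.mul_apply, swapMatrix,
    Matrix.kroneckerMap_apply, Matrix.of_apply, Fintype.sum_prod_type, ite_and,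
    mul_ite, mul_one, mul_zero]
  refine Finset.sum_congr rfl fun i _ => Finset.sum_congr rfl fun j _ => ?_
  rw [Finset.sum_comm]
  simp

lemma Rop_one_one_sub_Rop_zero_zero {m : Type*} [Fintype m] [DecidableEq m]
    (P : Matrix m m ℂ) :
    Rop P 1 1 - Rop P 0 0 =
      (P ⊗ₖ (1 - P)) * swapMatrix m + swapMatrix m * (P ⊗ₖ (1 - P)) := by
  have expand : ∀ Q T : Matrix (m × m) (m × m) ℂ,
      (1 + T) * Q * (1 + T) - (1 - T) * Q * (1 - T) = (2 : ℂ) • (Q * T + T * Q) := by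
    intro Q T
    rw [two_smul]
    noncomm_ring
  simp only [Rop, Fin.val_one, Fin.val_zero, pow_one, pow_zero, one_smul, neg_smul,
    sub_neg_eq_add, ← smul_sub, expand, smul_smul]
  norm_num

lemma trace_kronecker_mul_Rop_sub {m : Type*} [Fintype m] [DecidableEq m]
    (A B P : Matrix m m ℂ) :
    ((A ⊗ₖ B) * Rop P 1 1).trace - ((A ⊗ₖ B) * Rop P 0 0).trace
      = (A * P * (B * (1 - P))).trace + (P * A * ((1 - P) * B)).trace := by
  have swap_right : ((A ⊗ₖ B) * ((P ⊗ₖ (1 - P)) * swapMatrix m)).trace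
      = (A * P * (B * (1 - P))).trace := by
    rw [← mul_assoc, ← mul_kronecker_mul, trace_kronecker_mul_swapMatrix]
  have swap_left : ((A ⊗ₖ B) * (swapMatrix m * (P ⊗ₖ (1 - P)))).trace
      = (P * A * ((1 - P) * B)).trace := by
    rw [trace_mul_comm, mul_assoc, trace_mul_comm, ← mul_kronecker_mul,
      trace_kronecker_mul_swapMatrix]
  rw [← trace_sub, ← mul_sub, Rop_one_one_sub_Rop_zero_zero, mul_add, trace_add,
    swap_right, swap_left]

lemma trace_conjTranspose_commutator_mul_self {m R : Type*} [Fintype m] [DecidableEq m]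
    [CommRing R] [StarRing R] {A P : Matrix m m R} (hA : Aᴴ = A) (hPadj : Pᴴ = P)
    (hPproj : P * P = P) :
    ((A * P - P * A)ᴴ * (A * P - P * A)).trace
      = (A * P * (A * (1 - P))).trace + (P * A * ((1 - P) * A)).trace := by
  have hPPA : (A * (P * (P * A))).trace = (A * (P * A)).trace := by
    rw [← mul_assoc P, hPproj]
  have hPAAP : (P * (A * (A * P))).trace = (P * (A * A)).trace := by
    calc (P * (A * (A * P))).trace = (P * (A * A) * P).trace := by simp only [mul_assoc]
      _ = (P * (P * (A * A))).trace := trace_mul_comm _ _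
      _ = (P * (A * A)).trace := by rw [← mul_assoc, hPproj]
  simp only [conjTranspose_sub, conjTranspose_mul, hA, hPadj, mul_sub, sub_mul, mul_one,
    one_mul, trace_sub, mul_assoc]
  linear_combination hPPA + hPAAP

theorem trace_Rop_diff_eq_commutator_hs_norm {m : Type*} [Fintype m] [DecidableEq m]
    (ρ : Matrix m m ℂ) (hρ : ρ.PosSemidef)
    (P : Matrix m m ℂ) (hPadj : Pᴴ = P) (hPproj : P * P = P) :
    ((ρ ⊗ₖ ρ) * Rop P 1 1).trace - ((ρ ⊗ₖ ρ) * Rop P 0 0).trace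
      = ((ρ * P - P * ρ)ᴴ * (ρ * P - P * ρ)).trace := by
  rw [trace_kronecker_mul_Rop_sub,
    trace_conjTranspose_commutator_mul_self hρ.isHermitian hPadj hPproj]
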